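/- arXiv:1202.1584 — 4 statements merged into one kernel-verified Lean document; each statement's English description precedes it below -/
import Mathlib

section
/- Let T and T' be multicast trees spanning M in G such that lv(T) ⊆ M, and let ρ ≥ 0 be a real number with |in(T)| ≤ ρ·|in(T')|. Then Ψ(T) ≤ (ρ + 1)·Ψ(T'). -/
/-!
Compare `Ψ(T)` with `Ψ(T')` term by term, writing `k` for the total packet count. The internal-node
term is controlled by `|in(T)| ≤ ρ·|in(T')|`. Since the leaves of `T` are members, the leaf term
of `T` is at most `k`, and `k ≤ k·|in(T')| + Σ_{lv(T')} p` because a tree without internal nodes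
has every member as a leaf. In a tree with at least two vertices every vertex is internal or a
leaf and there are at least two leaves; hence `|nd(T)| ≤ |in(T)| + |M| ≤ ρ·|in(T')| + |nd(T')|`
and `|in(T')| ≤ |nd(T')| - 1`, which bounds the reception term by `(ρ + 1)·k·(|nd(T')| - 1)·ε_r`.
If `T'` is a single vertex then `|lv(T)| ≤ |M| ≤ 1` forces `T` to be one too, and both energies
vanish.
-/

namespace MEGCOM

/-- The set of internal nodes (degree at least 2) of a subgraph `T`. -/
def inn {V : Type*} {G : SimpleGraph V} (T : G.Subgraph) : Set V :=
  {v | v ∈ T.verts ∧ 2 ≤ (T.neighborSet v).ncard}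

/-- The set of degree-one nodes of a subgraph `T`. -/
def lv {V : Type*} {G : SimpleGraph V} (T : G.Subgraph) : Set V :=
  {v | v ∈ T.verts ∧ (T.neighborSet v).ncard = 1}

/-- `T` is a multicast tree spanning the member set `M`. -/
def IsMulticastTree {V : Type*} (G : SimpleGraph V) (M : Finset V) (T : G.Subgraph) : Prop :=
  T.coe.IsTree ∧ ↑M ⊆ T.verts

/-- Total energy `Ψ(T)` of a group communication session using `T` (fixed tx power). -/
noncomputable def psi {V : Type*} [Fintype V] {G : SimpleGraph V} (T : G.Subgraph)
    (M : Finset V) (p : V → ℕ) (εs εr : ℝ) : ℝ :=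
  (∑ u ∈ M, (p u : ℝ)) * ((inn T).ncard : ℝ) * εs
    + (∑ᶠ u ∈ lv T, (p u : ℝ)) * εs
    + (∑ u ∈ M, (p u : ℝ)) * ((T.verts.ncard : ℝ) - 1) * εr

lemma finsum_mem_le_finsum_mem_of_subset {α M : Type*} [AddCommMonoid M] [Preorder M]
    [AddLeftMono M] {f : α → M} (hf : 0 ≤ f) {s t : Set α} (ht : t.Finite) (hst : s ⊆ t) :
    ∑ᶠ x ∈ s, f x ≤ ∑ᶠ x ∈ t, f x := by
  rw [finsum_mem_eq_finite_toFinset_sum f (ht.subset hst), finsum_mem_eq_finite_toFinset_sum f ht]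
  exact Finset.sum_le_sum_of_subset_of_nonneg (by simpa) fun x _ _ => hf x

section Subgraph

variable {V : Type*} {G : SimpleGraph V} {T : G.Subgraph}

lemma ncard_neighborSet_coe (v : T.verts) :
    (T.coe.neighborSet v).ncard = (T.neighborSet v).ncard :=
  Nat.card_congr (SimpleGraph.Subgraph.coeNeighborSetEquiv v)

lemma inn_subset_verts : inn T ⊆ T.verts := fun _ hv => hv.1

lemma lv_subset_verts : lv T ⊆ T.verts := fun _ hv => hv.1

lemma disjoint_inn_lv : Disjoint (inn T) (lv T) :=
  Set.disjoint_left.2 fun _ hi hl => by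
    have := hi.2
    have := hl.2
    omega

lemma neighborSet_eq_empty_of_subsingleton (h : T.verts.Subsingleton) (v : V) :
    T.neighborSet v = ∅ :=
  Set.eq_empty_of_forall_notMem fun _ hw =>
    hw.ne (h (T.edge_vert hw) (T.edge_vert hw.symm))

lemma inn_eq_empty_of_subsingleton (h : T.verts.Subsingleton) : inn T = ∅ := by
  simp [inn, neighborSet_eq_empty_of_subsingleton h]

lemma lv_eq_empty_of_subsingleton (h : T.verts.Subsingleton) : lv T = ∅ := by
  simp [lv, neighborSet_eq_empty_of_subsingleton h]

lemma neighborSet_nonempty_of_connected (hc : T.coe.Connected) (hn : T.verts.Nontrivial)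
    {v : V} (hv : v ∈ T.verts) : (T.neighborSet v).Nonempty := by
  obtain ⟨w, hw, hwv⟩ := hn.exists_ne v
  obtain ⟨x, hx⟩ := (hc ⟨v, hv⟩ ⟨w, hw⟩).nonempty_neighborSet_left
    (by simpa [Subtype.ext_iff] using hwv.symm)
  exact ⟨x, hx⟩

lemma inn_union_lv_eq_verts (hc : T.coe.Connected) (hn : 1 < T.verts.ncard) :
    inn T ∪ lv T = T.verts := by
  obtain ⟨hnt, hfin⟩ := Set.one_lt_ncard_iff_nontrivial_and_finite.1 hn
  refine Set.union_subset inn_subset_verts lv_subset_verts |>.antisymm fun v hv => ?_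
  have hpos : 0 < (T.neighborSet v).ncard :=
    (Set.ncard_pos (hfin.subset (T.neighborSet_subset_verts v))).2
      (neighborSet_nonempty_of_connected hc hnt hv)
  rcases (Nat.one_le_iff_ne_zero.2 hpos.ne').eq_or_lt with h | h
  · exact Or.inr ⟨hv, h.symm⟩
  · exact Or.inl ⟨hv, h⟩

lemma ncard_inn_add_ncard_lv (hc : T.coe.Connected) (hn : 1 < T.verts.ncard) :
    (inn T).ncard + (lv T).ncard = T.verts.ncard := by
  have hfin := Set.finite_of_ncard_pos (zero_lt_one.trans hn)
  rw [← Set.ncard_union_eq disjoint_inn_lv (hfin.subset inn_subset_verts)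
    (hfin.subset lv_subset_verts), inn_union_lv_eq_verts hc hn]

lemma two_le_ncard_lv (hT : T.coe.IsTree) (hn : 1 < T.verts.ncard) : 2 ≤ (lv T).ncard := by
  classical
  obtain ⟨hnt, hfin⟩ := Set.one_lt_ncard_iff_nontrivial_and_finite.1 hn
  have : Finite T.verts := hfin
  have : Nontrivial T.verts := hnt.coe_sort
  have : T.coe.LocallyFinite := fun _ => Fintype.ofFinite _
  obtain ⟨u, v, huv, hu, hv⟩ := hT.exists_ne_and_degree_eq_one
  have hleaf : ∀ w : T.verts, T.coe.degree w = 1 → (w : V) ∈ lv T := fun w hw =>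
    ⟨w.2, by rw [← ncard_neighborSet_coe, Set.ncard_eq_toFinset_card', Set.toFinset_card,
      SimpleGraph.card_neighborSet_eq_degree, hw]⟩
  exact (Set.one_lt_ncard (hfin.subset lv_subset_verts)).2
    ⟨u, hleaf u hu, v, hleaf v hv, Subtype.coe_ne_coe.2 huv⟩

lemma ncard_inn_add_two_le_ncard_verts (hT : T.coe.IsTree) (hn : 1 < T.verts.ncard) :
    (inn T).ncard + 2 ≤ T.verts.ncard := by
  have := ncard_inn_add_ncard_lv hT.connected hn
  have := two_le_ncard_lv hT hn
  omega

lemma ncard_verts_le_ncard_inn_add_ncard (hc : T.coe.Connected) {s : Set V} (hs : lv T ⊆ s)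
    (hsf : s.Finite) (hs1 : 1 ≤ s.ncard) : T.verts.ncard ≤ (inn T).ncard + s.ncard := by
  rcases le_or_gt T.verts.ncard 1 with hn | hn
  · omega
  · rw [← ncard_inn_add_ncard_lv hc hn]
    exact Nat.add_le_add_left (Set.ncard_le_ncard hs hsf) _

lemma sum_le_sum_mul_ncard_inn_add_finsum_lv {f : V → ℝ} (hf : 0 ≤ f) (hc : T.coe.Connected)
    (hn : 1 < T.verts.ncard) {M : Finset V} (hM : ↑M ⊆ T.verts) :
    ∑ u ∈ M, f u ≤ (∑ u ∈ M, f u) * (inn T).ncard + ∑ᶠ u ∈ lv T, f u := by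
  have hsum : 0 ≤ ∑ u ∈ M, f u := Finset.sum_nonneg fun u _ => hf u
  rcases Nat.eq_zero_or_pos (inn T).ncard with h0 | hpos
  · have hinn : inn T = ∅ :=
      (Set.ncard_eq_zero ((Set.finite_of_ncard_pos (zero_lt_one.trans hn)).subset
        inn_subset_verts)).1 h0
    have hML : ↑M ⊆ lv T := by
      simpa [← inn_union_lv_eq_verts hc hn, hinn] using hM
    rw [h0, Nat.cast_zero, mul_zero, zero_add, ← finsum_mem_coe_finset]
    exact finsum_mem_le_finsum_mem_of_subset hf
      ((Set.finite_of_ncard_pos (zero_lt_one.trans hn)).subset lv_subset_verts) hML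
  · have : (1 : ℝ) ≤ (inn T).ncard := by exact_mod_cast hpos
    nlinarith [finsum_nonneg fun u => finsum_nonneg fun (_ : u ∈ lv T) => hf u]

end Subgraph

section Energy

variable {V : Type*} [Fintype V] {G : SimpleGraph V} {T T' : G.Subgraph} {M : Finset V}
  {p : V → ℕ} {εs εr ρ : ℝ}

lemma one_le_ncard_verts (hT : T.coe.Connected) : 1 ≤ T.verts.ncard :=
  (Set.ncard_pos).2 (Set.nonempty_coe_sort.1 hT.nonempty)

lemma psi_eq_zero_of_ncard_verts_eq_one (h : T.verts.ncard = 1) : psi T M p εs εr = 0 := by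
  have hs : T.verts.Subsingleton := by
    obtain ⟨a, ha⟩ := Set.ncard_eq_one.1 h
    exact ha ▸ Set.subsingleton_singleton
  simp [psi, inn_eq_empty_of_subsingleton hs, lv_eq_empty_of_subsingleton hs, h]

lemma psi_le_of_one_lt_ncard_verts (hT : T.coe.IsTree) (hT' : T'.coe.IsTree)
    (hMT' : ↑M ⊆ T'.verts) (hlv : lv T ⊆ ↑M) (hn' : 1 < T'.verts.ncard) (hεs : 0 ≤ εs)
    (hεr : 0 ≤ εr) (hρ : 0 ≤ ρ) (hin : ((inn T).ncard : ℝ) ≤ ρ * ((inn T').ncard : ℝ)) :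
    psi T M p εs εr ≤ (ρ + 1) * psi T' M p εs εr := by
  have hp : 0 ≤ fun u => (p u : ℝ) := fun u => Nat.cast_nonneg (p u)
  set k := ∑ u ∈ M, (p u : ℝ)
  have hk : 0 ≤ k := Finset.sum_nonneg fun u _ => hp u
  have hL' : 0 ≤ ∑ᶠ u ∈ lv T', (p u : ℝ) := finsum_nonneg fun u => finsum_nonneg fun _ => hp u
  have hLk : ∑ᶠ u ∈ lv T, (p u : ℝ) ≤ k :=
    (finsum_mem_le_finsum_mem_of_subset hp M.finite_toSet hlv).trans_eq
      (finsum_mem_coe_finset _ M)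
  have hkL' := sum_le_sum_mul_ncard_inn_add_finsum_lv hp hT'.connected hn' hMT'
  have hinn' : ((inn T').ncard : ℝ) + 2 ≤ T'.verts.ncard := by
    exact_mod_cast ncard_inn_add_two_le_ncard_verts hT' hn'
  have hn : (T.verts.ncard : ℝ) ≤ ρ * (inn T').ncard + T'.verts.ncard := by
    have : (T.verts.ncard : ℝ) ≤ (inn T).ncard + T'.verts.ncard := by
      exact_mod_cast ncard_verts_le_ncard_inn_add_ncard hT.connected (hlv.trans hMT')
        (Set.toFinite _) hn'.le
    linarith
  calc psi T M p εs εr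
      ≤ k * (ρ * (inn T').ncard) * εs + (k * (inn T').ncard + ∑ᶠ u ∈ lv T', (p u : ℝ)) * εs
        + k * (ρ * (inn T').ncard + T'.verts.ncard - 1) * εr := by
        unfold psi
        gcongr
        exact hLk.trans hkL'
    _ ≤ (ρ + 1) * psi T' M p εs εr := by
        unfold psi
        linarith [mul_nonneg (mul_nonneg hρ hL') hεs,
          mul_nonneg (mul_nonneg (mul_nonneg hρ hk) hεr)
            (by linarith : (0 : ℝ) ≤ T'.verts.ncard - 1 - (inn T').ncard)]

end Energy

theorem stmt3_general {V : Type*} [Fintype V] {G : SimpleGraph V} (M : Finset V)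
    (p : V → ℕ) (εs εr : ℝ)
    (hεs : 0 < εs) (hεr : 0 < εr)
    (T T' : G.Subgraph) (hT : IsMulticastTree G M T) (hT' : IsMulticastTree G M T')
    (hlv : lv T ⊆ ↑M) (ρ : ℝ) (hρ : 0 ≤ ρ)
    (hin : ((inn T).ncard : ℝ) ≤ ρ * ((inn T').ncard : ℝ)) :
    psi T M p εs εr ≤ (ρ + 1) * psi T' M p εs εr := by
  obtain ⟨hT, -⟩ := hT
  obtain ⟨hT', hMT'⟩ := hT'
  rcases (one_le_ncard_verts hT'.connected).eq_or_lt with hn' | hn'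
  · have hn : T.verts.ncard = 1 := by
      refine le_antisymm (not_lt.1 fun hn => ?_) (one_le_ncard_verts hT.connected)
      have := two_le_ncard_lv hT hn
      have := Set.ncard_le_ncard (hlv.trans hMT')
      omega
    rw [psi_eq_zero_of_ncard_verts_eq_one hn, psi_eq_zero_of_ncard_verts_eq_one hn'.symm,
      mul_zero]
  · exact psi_le_of_one_lt_ncard_verts hT hT' hMT' hlv hn' hεs.le hεr.le hρ hin

/-- if lv(T) ⊆ M and |in(T)| ≤ ρ·|in(T')| with ρ ≥ 0,
then Ψ(T) ≤ (ρ + 1)·Ψ(T'). -/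
theorem stmt3 {V : Type*} [Fintype V] {G : SimpleGraph V} (M : Finset V)
    (p : V → ℕ) (hp : ∀ u ∉ M, p u = 0) (εs εr : ℝ)
    (hεs : 0 < εs) (hεr : 0 < εr) (hrs : εr ≤ εs)
    (T T' : G.Subgraph) (hT : IsMulticastTree G M T) (hT' : IsMulticastTree G M T')
    (hlv : lv T ⊆ ↑M) (ρ : ℝ) (hρ : 0 ≤ ρ)
    (hin : ((inn T).ncard : ℝ) ≤ ρ * ((inn T').ncard : ℝ)) :
    psi T M p εs εr ≤ (ρ + 1) * psi T' M p εs εr :=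
  stmt3_general M p εs εr hεs hεr T T' hT hT' hlv ρ hρ hin

end MEGCOM
end

section
/- Let P be a finite set of points in the Euclidean plane ℝ², and let G be the unit disk graph on P (distinct points u, v are adjacent iff their Euclidean distance is at most 1). Let T be a tree subgraph of G spanning M ⊆ P with at least one internal node, and let C ⊆ M be an independent set of G. Then |C| ≤ 5·|in(T)|. -/
/-!
Every vertex of a connected subgraph `T` having an internal node is itself internal or adjacent
in `T` to an internal node: on a path towards an internal node, the second vertex has two
distinct neighbours. Hence `C` is covered by the closed neighbourhoods of the internal nodes, and
each closed neighbourhood meets the independent set `C` in at most five points. If the centre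
lies in `C` it is the only one; otherwise the points lie in the punctured unit disc about the
centre at mutual distance greater than `1`, so seen from the centre any two of them subtend an
angle greater than `π / 3`, and at most five such directions fit around a circle.
-/

namespace MEGCOM

/-- `C` is a guardian set for `M` in `G`: every member of `M` lies in `C` or is
adjacent in `G` to some vertex of `C`. -/
def IsGuardianSet {V : Type*} (G : SimpleGraph V) (M C : Set V) : Prop :=
  ∀ u ∈ M, u ∈ C ∨ ∃ c ∈ C, G.Adj u c

/-- The unit disk graph on a finite set of points in the Euclidean plane. -/
def unitDiskGraph (P : Finset (EuclideanSpace ℝ (Fin 2))) : SimpleGraph P where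
  Adj u v := u ≠ v ∧
    dist (u : EuclideanSpace ℝ (Fin 2)) (v : EuclideanSpace ℝ (Fin 2)) ≤ 1
  symm := ⟨fun u v ⟨h, hd⟩ => ⟨h.symm, by rwa [dist_comm]⟩⟩
  loopless := ⟨fun v h => h.1 rfl⟩

end MEGCOM

section
open Real

theorem half_le_cos_of_abs_le {x : ℝ} (hx : |x| ≤ π / 3) : 1 / 2 ≤ cos x := by
  rw [← cos_abs, ← cos_pi_div_three]
  exact cos_le_cos_of_nonneg_of_le_pi (abs_nonneg x) (by linarith [pi_pos]) hx

theorem card_le_five_of_pairwise_cos_sub_lt_half (s : Finset ℝ) (hs : ∀ θ ∈ s, θ ∈ Set.Ioc (-π) π)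
    (hpair : (s : Set ℝ).Pairwise fun a b => cos (a - b) < 1 / 2) : s.card ≤ 5 := by
  by_contra! hcard
  obtain ⟨t, hts, ht⟩ := Finset.exists_subset_card_eq hcard
  set θ : Fin 6 → ℝ := fun i => t.orderIsoOfFin ht i
  have hθ_mono : StrictMono θ := fun i j hij => (t.orderIsoOfFin ht).strictMono hij
  have hθ_mem : ∀ i, θ i ∈ s := fun i => hts (t.orderIsoOfFin ht i).2
  have hcos : ∀ i j, i ≠ j → cos (θ j - θ i) < 1 / 2 := fun i j hij =>
    hpair (hθ_mem j) (hθ_mem i) (hθ_mono.injective.ne hij.symm)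
  have hgap : ∀ i j : Fin 6, i < j → π / 3 < θ j - θ i := by
    intro i j hij
    by_contra! hle
    have := half_le_cos_of_abs_le (x := θ j - θ i)
      (abs_le.mpr ⟨by linarith [hθ_mono hij, pi_pos], hle⟩)
    linarith [hcos i j hij.ne]
  have hspread : 5 * π / 3 < θ 5 - θ 0 := by
    linarith [hgap 0 1 (by decide), hgap 1 2 (by decide), hgap 2 3 (by decide),
      hgap 3 4 (by decide), hgap 4 5 (by decide)]
  -- going the other way around the circle, `θ 0` and `θ 5` are less than `π / 3` apart
  have hwrap : 1 / 2 ≤ cos (2 * π - (θ 5 - θ 0)) := by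
    obtain ⟨h0, -⟩ := hs _ (hθ_mem 0)
    obtain ⟨-, h5⟩ := hs _ (hθ_mem 5)
    exact half_le_cos_of_abs_le (abs_le.mpr ⟨by linarith [pi_pos], by linarith⟩)
  rw [cos_two_pi_sub] at hwrap
  linarith [hcos 0 5 (by decide)]

end

theorem Complex.cos_arg_sub_lt_half {a b : ℂ} (ha : a ≠ 0) (hb : b ≠ 0) (ha1 : ‖a‖ ≤ 1)
    (hb1 : ‖b‖ ≤ 1) (hab : 1 < ‖a - b‖) : Real.cos (arg a - arg b) < 1 / 2 := by
  have ha0 : 0 < ‖a‖ := norm_pos_iff.mpr ha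
  have hb0 : 0 < ‖b‖ := norm_pos_iff.mpr hb
  have hcos : Real.cos (arg a - arg b) = (a.re * b.re + a.im * b.im) / (‖a‖ * ‖b‖) := by
    rw [Real.cos_sub, cos_arg ha, sin_arg, cos_arg hb, sin_arg]
    field_simp
  have hlaw : ‖a - b‖ ^ 2 = ‖a‖ ^ 2 + ‖b‖ ^ 2 - 2 * (a.re * b.re + a.im * b.im) := by
    simp only [Complex.sq_norm, normSq_apply, sub_re, sub_im]
    ring
  have h1 : 1 < ‖a - b‖ ^ 2 := by nlinarith [norm_nonneg (a - b)]
  have hsquare : ‖a‖ ^ 2 + ‖b‖ ^ 2 - ‖a‖ * ‖b‖ ≤ 1 := by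
    nlinarith [mul_nonneg (sub_nonneg.mpr ha1) hb0.le, mul_nonneg (sub_nonneg.mpr hb1) ha0.le]
  rw [hcos, div_lt_iff₀ (by positivity)]
  linarith

theorem Complex.card_le_five_of_pairwise_one_lt_dist (S : Finset ℂ)
    (hS : ∀ z ∈ S, z ≠ 0 ∧ ‖z‖ ≤ 1) (hpair : (S : Set ℂ).Pairwise fun a b => 1 < dist a b) :
    S.card ≤ 5 := by
  have hcos : (S : Set ℂ).Pairwise fun a b => Real.cos (arg a - arg b) < 1 / 2 :=
    fun a ha b hb hab => cos_arg_sub_lt_half (hS a ha).1 (hS b hb).1 (hS a ha).2 (hS b hb).2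
      (by simpa [dist_eq_norm] using hpair ha hb hab)
  have hinj : Set.InjOn arg S := by
    intro a ha b hb hab
    by_contra hne
    have : Real.cos (arg a - arg b) < 1 / 2 := hcos ha hb hne
    rw [hab, sub_self, Real.cos_zero] at this
    norm_num at this
  rw [← Finset.card_image_of_injOn hinj]
  refine card_le_five_of_pairwise_cos_sub_lt_half _ ?_ ?_
  · simp only [Finset.mem_image]
    rintro _ ⟨z, -, rfl⟩
    exact ⟨neg_pi_lt_arg z, arg_le_pi z⟩
  · simp only [Finset.coe_image]
    exact (hinj.pairwise_image).mpr hcos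

theorem card_le_five_of_pairwise_one_lt_dist {E : Type*} [NormedAddCommGroup E]
    [InnerProductSpace ℝ E] [Fact (Module.finrank ℝ E = 2)] (v : E) (S : Set E)
    (hS : S ⊆ Metric.closedBall v 1 \ {v}) (hpair : S.Pairwise fun x y => 1 < dist x y) :
    S.ncard ≤ 5 := by
  have : FiniteDimensional ℝ E := .of_fact_finrank_eq_two
  obtain hinf | hfin := S.finite_or_infinite.symm
  · simp [hinf.ncard]
  let e : E ≃ₗᵢ[ℝ] ℂ := (stdOrthonormalBasis ℝ E).equiv Complex.orthonormalBasisOneI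
    (finCongr Fact.out)
  let f : E → ℂ := fun x => e (x - v)
  have hf : Isometry f := e.isometry.comp (IsometryEquiv.subRight v).isometry
  rw [← hfin.coe_toFinset, Set.ncard_coe_finset, ← Finset.card_image_of_injective _ hf.injective]
  refine Complex.card_le_five_of_pairwise_one_lt_dist _ ?_ ?_
  · simp only [Finset.mem_image, Set.Finite.mem_toFinset]
    rintro _ ⟨x, hx, rfl⟩
    obtain ⟨hx1, hxv⟩ := hS hx
    refine ⟨by simpa [f, sub_eq_zero] using hxv, ?_⟩
    simpa [f, ← dist_eq_norm] using hx1
  · simp only [Finset.coe_image, Set.Finite.coe_toFinset]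
    rw [hf.injective.injOn.pairwise_image]
    intro x hx y hy hxy
    simp only [Function.onFun, hf.dist_eq]
    exact hpair hx hy hxy

theorem SimpleGraph.Reachable.exists_adj_eq_or_exists_adj_ne {V : Type*} {G : SimpleGraph V}
    {a b : V} (hab : a ≠ b) (h : G.Reachable a b) :
    ∃ c, G.Adj a c ∧ (c = b ∨ ∃ d, G.Adj c d ∧ d ≠ a) := by
  classical
  obtain ⟨p, hp⟩ := h.some.toPath
  cases p with
  | nil => exact absurd rfl hab
  | cons hac q =>
    cases q with
    | nil => exact ⟨_, hac, .inl rfl⟩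
    | cons hcd q =>
      refine ⟨_, hac, .inr ⟨_, hcd, fun hda => ?_⟩⟩
      rw [SimpleGraph.Walk.cons_isPath_iff, SimpleGraph.Walk.support_cons] at hp
      exact hp.2 (hda ▸ List.mem_cons_of_mem _ q.start_mem_support)

theorem SimpleGraph.Subgraph.two_le_ncard_neighborSet {V : Type*} [Finite V] {G : SimpleGraph V}
    (T : G.Subgraph) {v a b : V} (ha : T.Adj v a) (hb : T.Adj v b) (hab : a ≠ b) :
    2 ≤ (T.neighborSet v).ncard := by
  rw [← Set.ncard_pair hab]
  exact Set.ncard_le_ncard (Set.insert_subset ha (Set.singleton_subset_iff.mpr hb))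

theorem Set.ncard_le_mul_ncard_of_subset_biUnion {α β : Type*} [Finite α] [Finite β]
    {C : Set β} {D : Set α} {f : α → Set β} {k : ℕ} (hC : C ⊆ ⋃ i ∈ D, f i)
    (hf : ∀ i ∈ D, (C ∩ f i).ncard ≤ k) : C.ncard ≤ k * D.ncard := by
  classical
  have : Fintype α := .ofFinite α
  have : Fintype β := .ofFinite β
  calc C.ncard = C.toFinset.card := Set.ncard_eq_toFinset_card' C
    _ ≤ (D.toFinset.biUnion fun i => (C ∩ f i).toFinset).card := Finset.card_le_card fun b hb => by
        obtain ⟨i, hi, hbi⟩ := Set.mem_iUnion₂.mp (hC (Set.mem_toFinset.mp hb))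
        exact Finset.mem_biUnion.mpr ⟨i, Set.mem_toFinset.mpr hi,
          Set.mem_toFinset.mpr ⟨Set.mem_toFinset.mp hb, hbi⟩⟩
    _ ≤ D.toFinset.card * k := Finset.card_biUnion_le_card_mul _ _ _ fun i hi => by
        rw [← Set.ncard_eq_toFinset_card']; exact hf i (Set.mem_toFinset.mp hi)
    _ = k * D.ncard := by rw [Set.ncard_eq_toFinset_card', mul_comm]

namespace MEGCOM

theorem exists_mem_inn_eq_or_adj {V : Type*} [Finite V] {G : SimpleGraph V} (T : G.Subgraph)
    (hT : T.Preconnected) (hinn : (inn T).Nonempty) {u : V} (hu : u ∈ T.verts) :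
    ∃ v ∈ inn T, u = v ∨ T.Adj u v := by
  by_cases hu_inn : u ∈ inn T
  · exact ⟨u, hu_inn, .inl rfl⟩
  obtain ⟨z, hz⟩ := hinn
  have huz : (⟨u, hu⟩ : T.verts) ≠ ⟨z, hz.1⟩ := fun h => hu_inn (by cases h; exact hz)
  obtain ⟨c, huc, hc⟩ := (hT _ _).exists_adj_eq_or_exists_adj_ne huz
  rcases hc with rfl | ⟨d, hcd, hdu⟩
  · exact ⟨z, hz, .inr huc⟩
  · have hc_inn : (c : V) ∈ inn T :=
      ⟨c.2, T.two_le_ncard_neighborSet huc.symm hcd fun h => hdu (Subtype.ext h.symm)⟩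
    exact ⟨c, hc_inn, .inr huc⟩

theorem ncard_inter_insert_neighborSet_le_five (P : Finset (EuclideanSpace ℝ (Fin 2)))
    {C : Set P} (hC : C.Pairwise fun u v => ¬ (unitDiskGraph P).Adj u v) (v : P) :
    (C ∩ insert v ((unitDiskGraph P).neighborSet v)).ncard ≤ 5 := by
  by_cases hv : v ∈ C
  · have hsub : C ∩ insert v ((unitDiskGraph P).neighborSet v) ⊆ {v} := by
      rintro c ⟨hc, rfl | hvc⟩
      · rfl
      · exact absurd hvc (hC hv hc hvc.1)
    calc _ ≤ ({v} : Set P).ncard := Set.ncard_le_ncard hsub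
      _ ≤ 5 := by simp
  have : Fact (Module.finrank ℝ (EuclideanSpace ℝ (Fin 2)) = 2) := ⟨finrank_euclideanSpace_fin⟩
  rw [← Set.ncard_image_of_injective _ Subtype.val_injective]
  refine card_le_five_of_pairwise_one_lt_dist (v : EuclideanSpace ℝ (Fin 2)) _ ?_ ?_
  · rintro _ ⟨c, ⟨hc, rfl | hvc⟩, rfl⟩
    · exact absurd hc hv
    · exact ⟨by simpa [dist_comm] using hvc.2, fun h => hvc.1 (Subtype.ext h).symm⟩
  · rw [Subtype.val_injective.injOn.pairwise_image]
    intro a ha b hb hab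
    by_contra! hle
    exact hC ha.1 hb.1 hab ⟨hab, hle⟩

/-- an independent set of members has size at most `5·|in(T)|`. -/
theorem stmt10 (P : Finset (EuclideanSpace ℝ (Fin 2))) (M : Set P)
    (T : (unitDiskGraph P).Subgraph) (hT : T.coe.IsTree) (hM : M ⊆ T.verts)
    (hinn : (inn T).Nonempty) (C : Set P) (hCM : C ⊆ M)
    (hind : C.Pairwise fun u v => ¬ (unitDiskGraph P).Adj u v) :
    C.ncard ≤ 5 * (inn T).ncard := by
  have hcover : C ⊆ ⋃ v ∈ inn T, insert v ((unitDiskGraph P).neighborSet v) := by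
    intro c hc
    obtain ⟨v, hv, hcv⟩ :=
      exists_mem_inn_eq_or_adj T ⟨hT.connected.preconnected⟩ hinn (hM (hCM hc))
    exact Set.mem_iUnion₂.mpr ⟨v, hv, hcv.imp id fun h => (T.adj_sub h).symm⟩
  exact Set.ncard_le_mul_ncard_of_subset_biUnion hcover fun v _ =>
    ncard_inter_insert_neighborSet_le_five P hind v

end MEGCOM
end

section
/- (Lemma 3.) Let T be a multicast tree spanning M with at least 3 vertices in an edge-weighted graph. Then the total transmission energy of a group communication session using T, namely k·Θ(T) + Σ_{u∈lv(T)} λ(u,T)·p(u), is at most 2·k·Θ(T); equivalently, Σ_{u∈lv(T)} λ(u,T)·p(u) ≤ k·Θ(T). -/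
namespace MEGCOM

/-- `λ(u,T)`: the maximum weight of an edge of `T` incident to `u`. -/
noncomputable def lam {V : Type*} {G : SimpleGraph V} (w : V → V → ℝ)
    (T : G.Subgraph) (u : V) : ℝ :=
  sSup (w u '' T.neighborSet u)

/-- `Θ(T) = ∑_{u ∈ in(T)} λ(u,T)`. -/
noncomputable def theta {V : Type*} {G : SimpleGraph V} (w : V → V → ℝ)
    (T : G.Subgraph) : ℝ :=
  ∑ᶠ u ∈ inn T, lam w T u

/-- Adjustable-power session energy `Ψ'(T)`. -/
noncomputable def psi' {V : Type*} [Fintype V] {G : SimpleGraph V} (w : V → V → ℝ)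
    (T : G.Subgraph) (M : Finset V) (p : V → ℕ) (εr : ℝ) : ℝ :=
  (∑ u ∈ M, (p u : ℝ)) * theta w T
    + (∑ᶠ u ∈ lv T, lam w T u * (p u : ℝ))
    + (∑ u ∈ M, (p u : ℝ)) * ((T.verts.ncard : ℝ) - 1) * εr

/-- Vertices reachable from a degenerate edge `{u,v}` where both endpoints have
degree one stay in `{u,v}`. -/
private lemma walk_closed {V : Type*} {G : SimpleGraph V} {T : G.Subgraph}
    {u v : V} (hu : T.neighborSet u = {v}) (hv : T.neighborSet v = {u})
    {a b : T.verts} (p : T.coe.Walk a b) :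
    (a : V) ∈ ({u, v} : Set V) → (b : V) ∈ ({u, v} : Set V) := by
  induction p with
  | nil => exact id
  | @cons a c b h q ih =>
    intro ha
    apply ih
    have hadj : T.Adj (a : V) (c : V) := h
    rcases ha with ha | ha
    · have : (c : V) ∈ T.neighborSet u := by rw [← ha]; exact hadj
      rw [hu] at this
      exact Or.inr this
    · have : (c : V) ∈ T.neighborSet v := by rw [← ha]; exact hadj
      rw [hv] at this
      exact Or.inl this

/-- Lemma 3: total transmission energy is at most `2·k·Θ(T)`. -/

theorem stmt11 {V : Type*} [Fintype V] {G : SimpleGraph V} (w : V → V → ℝ)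
    (hw_symm : ∀ u v, w u v = w v u) (hw_nonneg : ∀ u v, 0 ≤ w u v)
    (M : Finset V) (p : V → ℕ) (hp : ∀ u ∉ M, p u = 0)
    (T : G.Subgraph) (hT : IsMulticastTree G M T) (h3 : 3 ≤ T.verts.ncard) :
    (∑ u ∈ M, (p u : ℝ)) * theta w T + (∑ᶠ u ∈ lv T, lam w T u * (p u : ℝ))
      ≤ 2 * ((∑ u ∈ M, (p u : ℝ)) * theta w T) := by
  classical
  set k : ℝ := ∑ u ∈ M, (p u : ℝ) with hk
  have hk0 : 0 ≤ k := Finset.sum_nonneg fun u _ => Nat.cast_nonneg _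
  -- finite sets
  have hinnfin : (inn T).Finite := Set.toFinite _
  have hlvfin : (lv T).Finite := Set.toFinite _
  -- lam is nonneg whenever neighborSet nonempty
  have hlam_nonneg : ∀ x : V, (T.neighborSet x).Nonempty → 0 ≤ lam w T x := by
    intro x ⟨y, hy⟩
    exact le_trans (hw_nonneg x y)
      (le_csSup ((T.neighborSet x).toFinite.image _).bddAbove ⟨y, hy, rfl⟩)
  have htheta0 : 0 ≤ theta w T := by
    rw [theta, finsum_mem_eq_finite_toFinset_sum _ hinnfin]
    refine Finset.sum_nonneg fun x hx => ?_
    have hx' : x ∈ inn T := hinnfin.mem_toFinset.mp hx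
    exact hlam_nonneg x (Set.nonempty_of_ncard_ne_zero (by have := hx'.2; omega))
  -- key: for leaf u, lam u ≤ theta
  have hkey : ∀ u ∈ lv T, lam w T u ≤ theta w T := by
    intro u hu
    obtain ⟨huT, hcard⟩ := hu
    obtain ⟨v, hv⟩ := Set.ncard_eq_one.mp hcard
    have hadj : T.Adj u v := by
      have : v ∈ T.neighborSet u := by rw [hv]; rfl
      exact this
    have hvT : v ∈ T.verts := hadj.snd_mem
    have hlamu : lam w T u = w u v := by
      rw [lam, hv, Set.image_singleton, csSup_singleton]
    -- v is internal
    have hvint : v ∈ inn T := by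
      refine ⟨hvT, ?_⟩
      by_contra hlt
      push_neg at hlt
      have hne : (T.neighborSet v).Nonempty := ⟨u, hadj.symm⟩
      have h1 : (T.neighborSet v).ncard = 1 := by
        have := (Set.ncard_pos (Set.toFinite _)).mpr hne
        omega
      obtain ⟨u', hu'⟩ := Set.ncard_eq_one.mp h1
      have huu' : u' = u := by
        have : u ∈ T.neighborSet v := hadj.symm
        rw [hu'] at this; exact this.symm
      rw [huu'] at hu'
      -- connectivity: all vertices in {u, v}
      have hconn := hT.1.isConnected
      have hsub : T.verts ⊆ ({u, v} : Set V) := by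
        intro x hx
        obtain ⟨W⟩ := hconn.preconnected ⟨u, huT⟩ ⟨x, hx⟩
        exact walk_closed hv hu' W (Or.inl rfl)
      have := Set.ncard_le_ncard hsub (Set.toFinite _)
      have h2 : ({u, v} : Set V).ncard ≤ 2 := by
        apply le_trans (Set.ncard_insert_le _ _)
        simp [Set.ncard_singleton]
      omega
    -- lam v ≥ w u v
    have hlamv : w u v ≤ lam w T v := by
      rw [hw_symm u v]
      exact le_csSup ((T.neighborSet v).toFinite.image _).bddAbove
        ⟨u, hadj.symm, rfl⟩
    -- theta ≥ lam v
    have : lam w T v ≤ theta w T := by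
      rw [theta, finsum_mem_eq_finite_toFinset_sum _ hinnfin]
      refine Finset.single_le_sum (f := fun x => lam w T x) ?_ (hinnfin.mem_toFinset.mpr hvint)
      intro x hx
      have hx' : x ∈ inn T := hinnfin.mem_toFinset.mp hx
      exact hlam_nonneg x (Set.nonempty_of_ncard_ne_zero (by have := hx'.2; omega))
    calc lam w T u = w u v := hlamu
      _ ≤ lam w T v := hlamv
      _ ≤ theta w T := this
  -- now bound the leaf sum
  have hmain : (∑ᶠ u ∈ lv T, lam w T u * (p u : ℝ)) ≤ k * theta w T := by
    rw [finsum_mem_eq_finite_toFinset_sum _ hlvfin]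
    have h1 : ∑ u ∈ hlvfin.toFinset, lam w T u * (p u : ℝ)
        ≤ ∑ u ∈ hlvfin.toFinset, theta w T * (p u : ℝ) := by
      refine Finset.sum_le_sum fun u hu => ?_
      exact mul_le_mul_of_nonneg_right (hkey u (hlvfin.mem_toFinset.mp hu)) (Nat.cast_nonneg _)
    refine le_trans h1 ?_
    rw [← Finset.mul_sum, mul_comm k (theta w T)]
    refine mul_le_mul_of_nonneg_left ?_ htheta0
    -- sum of p over leaves ≤ sum over M
    have : ∑ u ∈ hlvfin.toFinset, (p u : ℝ) = ∑ u ∈ hlvfin.toFinset ∩ M, (p u : ℝ) := by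
      refine (Finset.sum_subset (Finset.inter_subset_left) ?_).symm
      intro x hx hx'
      have : x ∉ M := fun hm => hx' (Finset.mem_inter.mpr ⟨hx, hm⟩)
      simp [hp x this]
    rw [this]
    exact Finset.sum_le_sum_of_subset_of_nonneg Finset.inter_subset_right
      fun i _ _ => Nat.cast_nonneg _
  linarith

end MEGCOM
end

section
/- (Lemma 4, conditional form.) Let T and T_opt be multicast trees spanning M in an edge-weighted graph, suppose ε_r ≤ λ(v,T) for every v ∈ in(T), and suppose |lv(T)| ≤ |M| ≤ |nd(T_opt)|. Then the total reception energy of a group communication session using T, namely k·(|nd(T)| − 1)·ε_r, is at most Ψ'(T_opt) + k·Θ(T). -/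
namespace MEGCOM

/-- Lemma 4, conditional form: the total reception energy
`k·(|nd(T)| − 1)·ε_r` is at most `Ψ'(T_opt) + k·Θ(T)`. -/
theorem stmt13 {V : Type*} [Fintype V] {G : SimpleGraph V} (w : V → V → ℝ)
    (hw_symm : ∀ u v, w u v = w v u) (hw_nonneg : ∀ u v, 0 ≤ w u v)
    (M : Finset V) (p : V → ℕ) (hp : ∀ u ∉ M, p u = 0)
    (T Topt : G.Subgraph)
    (hT : IsMulticastTree G M T) (hTopt : IsMulticastTree G M Topt)
    (εr : ℝ) (hεr : 0 < εr) (hlam : ∀ v ∈ inn T, εr ≤ lam w T v)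
    (hlv : (lv T).ncard ≤ M.card) (hM : M.card ≤ Topt.verts.ncard) :
    (∑ u ∈ M, (p u : ℝ)) * ((T.verts.ncard : ℝ) - 1) * εr
      ≤ psi' w Topt M p εr + (∑ u ∈ M, (p u : ℝ)) * theta w T := by
  set k : ℝ := ∑ u ∈ M, (p u : ℝ) with hk
  have hk0 : 0 ≤ k := Finset.sum_nonneg fun u _ => Nat.cast_nonneg _
  -- lam is nonnegative
  have hlam_nonneg : ∀ (T' : G.Subgraph) (u : V), 0 ≤ lam w T' u := by
    intro T' u
    unfold lam
    rcases (T'.neighborSet u).eq_empty_or_nonempty with h | ⟨x, hx⟩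
    · simp [h, Real.sSup_empty]
    · have hb : BddAbove (w u '' T'.neighborSet u) :=
        ((T'.neighborSet u).toFinite.image _).bddAbove
      exact le_trans (hw_nonneg u x) (le_csSup hb ⟨x, hx, rfl⟩)
  -- theta is nonnegative
  have htheta_nonneg : ∀ (T' : G.Subgraph), 0 ≤ theta w T' := by
    intro T'
    unfold theta
    rw [finsum_mem_eq_finite_toFinset_sum _ (Set.toFinite (inn T'))]
    exact Finset.sum_nonneg fun u _ => hlam_nonneg T' u
  -- leaf sum of Topt is nonnegative
  have hleaf_nonneg : 0 ≤ ∑ᶠ u ∈ lv Topt, lam w Topt u * (p u : ℝ) := by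
    rw [finsum_mem_eq_finite_toFinset_sum _ (Set.toFinite (lv Topt))]
    exact Finset.sum_nonneg fun u _ =>
      mul_nonneg (hlam_nonneg Topt u) (Nat.cast_nonneg _)
  -- theta T dominates εr times the number of internal nodes
  have htheta_ge : εr * ((inn T).ncard : ℝ) ≤ theta w T := by
    unfold theta
    rw [finsum_mem_eq_finite_toFinset_sum _ (Set.toFinite (inn T)),
      Set.ncard_eq_toFinset_card (inn T) (Set.toFinite (inn T))]
    calc εr * (((Set.toFinite (inn T)).toFinset.card : ℝ))
        = ∑ _u ∈ (Set.toFinite (inn T)).toFinset, εr := by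
          rw [Finset.sum_const, nsmul_eq_mul, mul_comm]
      _ ≤ ∑ u ∈ (Set.toFinite (inn T)).toFinset, lam w T u :=
          Finset.sum_le_sum fun u hu => hlam u ((Set.Finite.mem_toFinset _).mp hu)
  -- Topt is nonempty
  have hTopt1 : 1 ≤ Topt.verts.ncard := by
    have hne : Topt.verts.Nonempty :=
      Set.nonempty_coe_sort.mp hTopt.1.isConnected.nonempty
    exact (Set.ncard_pos (Set.toFinite _)).mpr hne
  -- key cardinality inequality
  have hcard : ((T.verts.ncard : ℝ)) - 1
      ≤ ((Topt.verts.ncard : ℝ)) - 1 + ((inn T).ncard : ℝ) := by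
    by_cases hA : T.verts.ncard ≤ 1
    · have h1 : ((T.verts.ncard : ℝ)) ≤ 1 := by exact_mod_cast hA
      have h2 : (1 : ℝ) ≤ (Topt.verts.ncard : ℝ) := by exact_mod_cast hTopt1
      have h3 : (0 : ℝ) ≤ ((inn T).ncard : ℝ) := Nat.cast_nonneg _
      linarith
    · push_neg at hA
      -- there are two distinct vertices in T
      obtain ⟨a, b, ha, hb, hab⟩ :=
        (Set.one_lt_ncard_iff (Set.toFinite T.verts)).mp hA
      -- every vertex of T is internal or a leaf
      have hsub : T.verts ⊆ inn T ∪ lv T := by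
        intro v hv
        have hne : (T.neighborSet v).Nonempty := by
          obtain ⟨u, hu, hvu⟩ : ∃ u, u ∈ T.verts ∧ v ≠ u := by
            by_cases hva : v = a
            · exact ⟨b, hb, by rw [hva]; exact hab⟩
            · exact ⟨a, ha, hva⟩
          obtain ⟨pw⟩ := hT.1.isConnected.preconnected ⟨v, hv⟩ ⟨u, hu⟩
          cases pw with
          | nil => exact (hvu rfl).elim
          | cons h' p' => exact ⟨_, (SimpleGraph.Subgraph.coe_adj _ _ _).mp h'⟩
        have hpos : 1 ≤ (T.neighborSet v).ncard :=
          (Set.ncard_pos (Set.toFinite _)).mpr hne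
        rcases eq_or_lt_of_le hpos with h1 | h2
        · exact Or.inr ⟨hv, h1.symm⟩
        · exact Or.inl ⟨hv, h2⟩
      have h1 : T.verts.ncard ≤ (inn T ∪ lv T).ncard :=
        Set.ncard_le_ncard hsub (Set.toFinite _)
      have h2 : (inn T ∪ lv T).ncard ≤ (inn T).ncard + (lv T).ncard :=
        Set.ncard_union_le _ _
      have h3 : T.verts.ncard ≤ (inn T).ncard + Topt.verts.ncard := by
        omega
      have h3' : ((T.verts.ncard : ℝ)) ≤ ((inn T).ncard : ℝ) + (Topt.verts.ncard : ℝ) := by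
        exact_mod_cast h3
      linarith
  -- assemble
  have hpsi : psi' w Topt M p εr
      = k * theta w Topt + (∑ᶠ u ∈ lv Topt, lam w Topt u * (p u : ℝ))
        + k * ((Topt.verts.ncard : ℝ) - 1) * εr := rfl
  have hmain : k * ((T.verts.ncard : ℝ) - 1) * εr
      ≤ k * ((Topt.verts.ncard : ℝ) - 1) * εr + k * theta w T := by
    have step : k * ((T.verts.ncard : ℝ) - 1) * εr
        ≤ k * ((Topt.verts.ncard : ℝ) - 1) * εr + k * (εr * ((inn T).ncard : ℝ)) := by
      nlinarith [mul_le_mul_of_nonneg_left hcard (mul_nonneg hk0 hεr.le)]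
    have step2 : k * (εr * ((inn T).ncard : ℝ)) ≤ k * theta w T :=
      mul_le_mul_of_nonneg_left htheta_ge hk0
    linarith
  have h4 : 0 ≤ k * theta w Topt := mul_nonneg hk0 (htheta_nonneg Topt)
  rw [hpsi]
  linarith

end MEGCOM
end
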